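/- Let f : ℝ → ℝ be a convex function and let A, B be n×n Hermitian complex matrices. Set X = f((A+B)/2) and Y = (f(A)+f(B))/2. Then there exist n×n unitary matrices U and V such that X ≤ (U Y Uᴴ + V Y Vᴴ)/2 in the Loewner order. -/

import Mathlib

/-!
Write `Z = (A + B) / 2` and `Y = (f(A) + f(B)) / 2`. Jensen's inequality, first for the spectral
weights of a unit vector `x` and then for the two-point mean, gives `f ⟪x, Z x⟫ ≤ ⟪x, Y x⟫`.

Let `t` minimise `f` on the convex hull of the spectrum of `Z`, and split an eigenbasis of `Z` into
the eigenvalues below `t`, where `f` is decreasing, and those above `t`, where `f` is increasing.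
Order each block so that `f(λⱼ)` decreases. A unit vector `x` in the span of the first `j`
eigenvectors of a block has `⟪x, Z x⟫` between `λⱼ` and `t`, hence `f(λⱼ) ≤ f ⟪x, Z x⟫ ≤ ⟪x, Y x⟫`,
so by the min-max principle the compression of `Y` to the block has `j`-th largest eigenvalue at
least `f(λⱼ)`, i.e. `f(Z)` is below a unitary conjugate of it on that block. The block diagonal
part of `Y` is the average of `Y` and `J Y J` with `J = diag(1, -1)`, which produces `U` and
`V = U J`.
-/

open Matrix
open scoped ComplexOrder

/-- The `j`-th largest eigenvalue of a Hermitian matrix (`0`-indexed, so `eigDesc hA ⟨0, _⟩`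
is the largest), counted with multiplicity. -/
noncomputable def eigDesc {n : ℕ} {A : Matrix (Fin n) (Fin n) ℂ} (hA : A.IsHermitian)
    (j : Fin n) : ℝ :=
  hA.eigenvalues (Tuple.sort hA.eigenvalues j.rev)

/-- Applying a real function to a Hermitian matrix via the functional calculus yields a
Hermitian matrix. -/
lemma isHermitian_cfc {n : ℕ} {A : Matrix (Fin n) (Fin n) ℂ} (hA : A.IsHermitian)
    (f : ℝ → ℝ) : (hA.cfc f).IsHermitian := by
  rw [← hA.cfc_eq]
  exact cfc_predicate f A

lemma isHermitian_half_smul {n : ℕ} {X : Matrix (Fin n) (Fin n) ℂ} (hX : X.IsHermitian) :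
    ((2 : ℝ)⁻¹ • X).IsHermitian := by
  show _ = _
  rw [Matrix.conjTranspose_smul, star_trivial, hX.eq]

lemma isHermitian_sum_conj {m n : ℕ} {A : Fin m → Matrix (Fin n) (Fin n) ℂ}
    (Z : Fin m → Matrix (Fin n) (Fin n) ℂ) (hA : ∀ i, (A i).IsHermitian) :
    (∑ i, (Z i)ᴴ * A i * Z i).IsHermitian := by
  show _ = _
  rw [Matrix.conjTranspose_sum]
  exact Finset.sum_congr rfl fun i _ => (isHermitian_conjTranspose_mul_mul (Z i) (hA i)).eq

lemma Fintype.exists_equiv_fin_monotone {α β : Type*} [Fintype α] [LinearOrder β] (r : α → β) :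
    ∃ e : Fin (Fintype.card α) ≃ α, Monotone (r ∘ e) :=
  ⟨(Tuple.sort (r ∘ (Fintype.equivFin α).symm)).trans (Fintype.equivFin α).symm,
    Tuple.monotone_sort (r ∘ (Fintype.equivFin α).symm)⟩

lemma Fintype.exists_sumEquiv_monotone_antitone {ι : Type*} [Fintype ι] (r : ι → ℝ) (t : ℝ) :
    ∃ (p q : ℕ) (e : Fin p ⊕ Fin q ≃ ι), (∀ k, r (e (.inl k)) < t) ∧
      Monotone (fun k => r (e (.inl k))) ∧ (∀ k, t ≤ r (e (.inr k))) ∧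
      Antitone (fun k => r (e (.inr k))) := by
  classical
  obtain ⟨e₁, he₁⟩ := exists_equiv_fin_monotone fun i : {i // r i < t} => r i
  obtain ⟨e₂, he₂⟩ := exists_equiv_fin_monotone fun i : {i // ¬r i < t} => OrderDual.toDual (r i)
  exact ⟨_, _, (e₁.sumCongr e₂).trans (Equiv.sumCompl _), fun k => (e₁ k).2, he₁,
    fun k => not_lt.mp (e₂ k).2, he₂⟩

lemma sum_mul_le_mul_sum_of_ne_zero {ι : Type*} [Fintype ι] {w ν : ι → ℝ} {c : ℝ}
    (hw : ∀ k, 0 ≤ w k) (hν : ∀ k, w k ≠ 0 → ν k ≤ c) : ∑ k, w k * ν k ≤ c * ∑ k, w k := by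
  rw [Finset.mul_sum]
  refine Finset.sum_le_sum fun k _ => ?_
  rcases eq_or_ne (w k) 0 with hk | hk
  · simp [hk]
  · rw [mul_comm c]
    exact mul_le_mul_of_nonneg_left (hν k hk) (hw k)

lemma ConvexOn.apply_le_of_mem_segment {E : Type*} [AddCommMonoid E] [Module ℝ E] {s : Set E}
    {f : E → ℝ} (hf : ConvexOn ℝ s f) {x y t : E} (hx : x ∈ s) (ht : t ∈ s)
    (hy : y ∈ segment ℝ x t) (hft : f t ≤ f x) : f y ≤ f x :=
  (hf.le_on_segment hx ht hy).trans (max_le le_rfl hft)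

section ConvexMinimizer

variable {f : ℝ → ℝ} {s : Set ℝ} {t : ℝ} {m : ℕ} {ν w : Fin m → ℝ} {j : Fin m}

lemma ConvexOn.apply_le_apply_sum_of_monotone (hf : ConvexOn ℝ Set.univ f) (hs : Convex ℝ s)
    (ht : IsMinOn f s t) (hνs : ∀ k, ν k ∈ s) (hν : Monotone ν) (hνt : ∀ k, ν k ≤ t)
    (hw₀ : ∀ k, 0 ≤ w k) (hw₁ : ∑ k, w k = 1) (hwj : ∀ k, j < k → w k = 0) :
    f (ν j) ≤ f (∑ k, w k * ν k) := by
  -- `ν j` lies between the weighted mean and the minimiser `t`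
  have hz : ∑ k, w k * ν k ≤ ν j := by
    simpa [hw₁] using sum_mul_le_mul_sum_of_ne_zero hw₀ fun k hk =>
      hν (not_lt.mp fun hjk => hk (hwj k hjk))
  refine hf.apply_le_of_mem_segment trivial trivial ?_
    (ht (hs.sum_mem (fun k _ => hw₀ k) hw₁ fun k _ => hνs k))
  rw [segment_eq_Icc (hz.trans (hνt j))]
  exact ⟨hz, hνt j⟩

lemma ConvexOn.apply_le_apply_sum_of_antitone (hf : ConvexOn ℝ Set.univ f) (hs : Convex ℝ s)
    (ht : IsMinOn f s t) (hνs : ∀ k, ν k ∈ s) (hν : Antitone ν) (hνt : ∀ k, t ≤ ν k)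
    (hw₀ : ∀ k, 0 ≤ w k) (hw₁ : ∑ k, w k = 1) (hwj : ∀ k, j < k → w k = 0) :
    f (ν j) ≤ f (∑ k, w k * ν k) := by
  have hz : ν j ≤ ∑ k, w k * ν k := by
    have := sum_mul_le_mul_sum_of_ne_zero (ν := -ν) (c := -ν j) hw₀ fun k hk =>
      neg_le_neg (hν (not_lt.mp fun hjk => hk (hwj k hjk)))
    simpa [hw₁, Finset.sum_neg_distrib] using this
  refine hf.apply_le_of_mem_segment trivial trivial ?_
    (ht (hs.sum_mem (fun k _ => hw₀ k) hw₁ fun k _ => hνs k))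
  rw [segment_symm, segment_eq_Icc ((hνt j).trans hz)]
  exact ⟨hνt j, hz⟩

end ConvexMinimizer

namespace Matrix

section QuadraticForm

variable {ι κ : Type*} [Fintype ι] [Fintype κ]

lemma star_dotProduct_conjTranspose_mul_mul_mulVec (W : Matrix ι κ ℂ) (N : Matrix ι ι ℂ)
    (v : κ → ℂ) : star v ⬝ᵥ (Wᴴ * N * W) *ᵥ v = star (W *ᵥ v) ⬝ᵥ N *ᵥ (W *ᵥ v) := by
  rw [star_mulVec, ← mulVec_mulVec, ← mulVec_mulVec, dotProduct_mulVec (star v) Wᴴ]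

lemma star_mulVec_dotProduct_mulVec_of_conjTranspose_mul_self [DecidableEq ι] [DecidableEq κ]
    {W : Matrix ι κ ℂ} (hW : Wᴴ * W = 1) (v : κ → ℂ) : star (W *ᵥ v) ⬝ᵥ W *ᵥ v = star v ⬝ᵥ v := by
  simpa [hW] using (star_dotProduct_conjTranspose_mul_mul_mulVec W 1 v).symm

lemma star_dotProduct_diagonal_mulVec [DecidableEq ι] (r : ι → ℝ) (x : ι → ℂ) :
    star x ⬝ᵥ diagonal (fun i => (r i : ℂ)) *ᵥ x =
      ((∑ i, Complex.normSq (x i) * r i : ℝ) : ℂ) := by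
  simp only [dotProduct, mulVec_diagonal, Pi.star_apply, Complex.ofReal_sum, Complex.ofReal_mul,
    Complex.normSq_eq_conj_mul_self, RCLike.star_def]
  exact Finset.sum_congr rfl fun i _ => by ring

lemma star_dotProduct_self_eq (x : ι → ℂ) :
    star x ⬝ᵥ x = ((∑ i, Complex.normSq (x i) : ℝ) : ℂ) := by
  classical
  simpa using star_dotProduct_diagonal_mulVec (fun _ => 1) x

lemma sum_normSq_eq_one {x : ι → ℂ} (hx : star x ⬝ᵥ x = 1) : ∑ i, Complex.normSq (x i) = 1 := by
  exact_mod_cast (star_dotProduct_self_eq x).symm.trans hx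

lemma exists_star_smul_dotProduct_smul_eq_one {x : ι → ℂ} (hx : x ≠ 0) :
    ∃ a : ℂ, star (a • x) ⬝ᵥ a • x = 1 := by
  set s := ∑ i, Complex.normSq (x i)
  have hs : 0 < s := by
    have := dotProduct_star_self_pos_iff.mpr hx
    rwa [star_dotProduct_self_eq, Complex.zero_lt_real] at this
  refine ⟨((Real.sqrt s)⁻¹ : ℝ), ?_⟩
  rw [star_smul, smul_dotProduct, dotProduct_smul, star_dotProduct_self_eq, Complex.star_def,
    Complex.conj_ofReal, smul_eq_mul, smul_eq_mul, ← Complex.ofReal_mul, ← Complex.ofReal_mul,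
    ← mul_assoc, ← mul_inv, Real.mul_self_sqrt hs.le, inv_mul_cancel₀ hs.ne', Complex.ofReal_one]

variable {κ₁ κ₂ : Type*} [Fintype κ₁] [Fintype κ₂]

lemma star_sumElim_zero_dotProduct_mulVec (M : Matrix (κ₁ ⊕ κ₂) (κ₁ ⊕ κ₂) ℂ) (x : κ₁ → ℂ) :
    star (Sum.elim x 0) ⬝ᵥ M *ᵥ Sum.elim x 0 = star x ⬝ᵥ M.toBlocks₁₁ *ᵥ x := by
  conv_lhs => rw [← fromBlocks_toBlocks M]
  simp [fromBlocks_mulVec, Function.star_sumElim, sumElim_dotProduct_sumElim]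

lemma star_zero_sumElim_dotProduct_mulVec (M : Matrix (κ₁ ⊕ κ₂) (κ₁ ⊕ κ₂) ℂ) (x : κ₂ → ℂ) :
    star (Sum.elim 0 x) ⬝ᵥ M *ᵥ Sum.elim 0 x = star x ⬝ᵥ M.toBlocks₂₂ *ᵥ x := by
  conv_lhs => rw [← fromBlocks_toBlocks M]
  simp [fromBlocks_mulVec, Function.star_sumElim, sumElim_dotProduct_sumElim]

end QuadraticForm

section Isometry

variable {ι κ : Type*} [Fintype ι] [Fintype κ] [DecidableEq ι] [DecidableEq κ]

omit [Fintype κ] in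
lemma submatrix_id_equiv_conjTranspose_mul_self {W : Matrix ι ι ℂ} (hW : W ∈ unitaryGroup ι ℂ)
    (e : κ ≃ ι) : (W.submatrix id e)ᴴ * W.submatrix id e = 1 := by
  rw [conjTranspose_submatrix, ← submatrix_mul _ _ _ _ _ Function.bijective_id,
    ← star_eq_conjTranspose, Unitary.star_mul_self_of_mem hW, submatrix_one_equiv]

omit [DecidableEq κ] in
lemma submatrix_id_equiv_mul_conjTranspose_self {W : Matrix ι ι ℂ} (hW : W ∈ unitaryGroup ι ℂ)
    (e : κ ≃ ι) : W.submatrix id e * (W.submatrix id e)ᴴ = 1 := by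
  rw [conjTranspose_submatrix, submatrix_mul_equiv, ← star_eq_conjTranspose,
    Unitary.mul_star_self_of_mem hW, submatrix_id_id]

omit [DecidableEq ι] in
lemma conjTranspose_mul_mul_conjTranspose_mul_of_conjTranspose_mul_self {W : Matrix ι κ ℂ}
    (hW : Wᴴ * W = 1) (D : Matrix κ κ ℂ) : Wᴴ * (W * D * Wᴴ) * W = D := by
  rw [← Matrix.mul_assoc, ← Matrix.mul_assoc, hW, Matrix.one_mul, Matrix.mul_assoc, hW,
    Matrix.mul_one]

lemma mul_mul_conjTranspose_mem_unitaryGroup {W : Matrix ι κ ℂ} (hW₁ : Wᴴ * W = 1)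
    (hW₂ : W * Wᴴ = 1) {U : Matrix κ κ ℂ} (hU : U ∈ unitaryGroup κ ℂ) :
    W * U * Wᴴ ∈ unitaryGroup ι ℂ := by
  rw [mem_unitaryGroup_iff, star_eq_conjTranspose] at *
  simp only [conjTranspose_mul, conjTranspose_conjTranspose, Matrix.mul_assoc]
  rw [← Matrix.mul_assoc Wᴴ W, hW₁, Matrix.one_mul, ← Matrix.mul_assoc U, hU, Matrix.one_mul, hW₂]

end Isometry

namespace IsHermitian

variable {ι κ : Type*} [Fintype ι] [Fintype κ] [DecidableEq ι] {A : Matrix ι ι ℂ}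
  (hA : A.IsHermitian)
include hA

lemma eq_cfc_id : A = hA.cfc id := by
  rw [← hA.cfc_eq]
  exact (cfc_id ℝ A).symm

lemma cfc_eq_submatrix_mul_diagonal_mul [DecidableEq κ] (e : κ ≃ ι) (g : ℝ → ℝ) :
    hA.cfc g = (hA.eigenvectorUnitary : Matrix ι ι ℂ).submatrix id e *
      diagonal (fun k => (g (hA.eigenvalues (e k)) : ℂ)) *
      ((hA.eigenvectorUnitary : Matrix ι ι ℂ).submatrix id e)ᴴ := by
  have hd : diagonal (fun k => (g (hA.eigenvalues (e k)) : ℂ)) =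
      (diagonal (RCLike.ofReal ∘ g ∘ hA.eigenvalues)).submatrix e e := by
    rw [submatrix_diagonal_equiv]
    rfl
  rw [hd, conjTranspose_submatrix, submatrix_mul_equiv, submatrix_mul_equiv, submatrix_id_id,
    IsHermitian.cfc, Unitary.conjStarAlgAut_apply, star_eq_conjTranspose]

lemma conjTranspose_mul_mul_eigenvectorUnitary_submatrix [DecidableEq κ] (e : κ ≃ ι) :
    ((hA.eigenvectorUnitary : Matrix ι ι ℂ).submatrix id e)ᴴ * A *
      (hA.eigenvectorUnitary : Matrix ι ι ℂ).submatrix id e =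
      diagonal fun k => (hA.eigenvalues (e k) : ℂ) := by
  conv_lhs => enter [1, 2]; rw [hA.eq_cfc_id, hA.cfc_eq_submatrix_mul_diagonal_mul e]
  exact conjTranspose_mul_mul_conjTranspose_mul_of_conjTranspose_mul_self
    (submatrix_id_equiv_conjTranspose_mul_self hA.eigenvectorUnitary.2 e) _

lemma re_star_dotProduct_cfc_mulVec (g : ℝ → ℝ) (x : ι → ℂ) :
    (star x ⬝ᵥ hA.cfc g *ᵥ x).re = ∑ i,
      Complex.normSq (((hA.eigenvectorUnitary : Matrix ι ι ℂ)ᴴ *ᵥ x) i) * g (hA.eigenvalues i) := by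
  have := star_dotProduct_conjTranspose_mul_mul_mulVec (hA.eigenvectorUnitary : Matrix ι ι ℂ)ᴴ
    (diagonal fun i => (g (hA.eigenvalues i) : ℂ)) x
  rw [conjTranspose_conjTranspose, star_dotProduct_diagonal_mulVec] at this
  rw [IsHermitian.cfc, Unitary.conjStarAlgAut_apply, star_eq_conjTranspose]
  exact (congrArg Complex.re this).trans (Complex.ofReal_re _)

theorem apply_re_dotProduct_le_re_dotProduct_cfc {f : ℝ → ℝ} (hf : ConvexOn ℝ Set.univ f)
    {x : ι → ℂ} (hx : star x ⬝ᵥ x = 1) :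
    f (star x ⬝ᵥ A *ᵥ x).re ≤ (star x ⬝ᵥ hA.cfc f *ᵥ x).re := by
  have hW : ((hA.eigenvectorUnitary : Matrix ι ι ℂ)ᴴ)ᴴ *
      (hA.eigenvectorUnitary : Matrix ι ι ℂ)ᴴ = 1 := by
    rw [conjTranspose_conjTranspose, ← star_eq_conjTranspose,
      Unitary.mul_star_self_of_mem hA.eigenvectorUnitary.2]
  have hw := sum_normSq_eq_one
    ((star_mulVec_dotProduct_mulVec_of_conjTranspose_mul_self hW x).trans hx)
  conv_lhs => rw [hA.eq_cfc_id]
  rw [re_star_dotProduct_cfc_mulVec, re_star_dotProduct_cfc_mulVec]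
  exact hf.map_sum_le (fun _ _ => Complex.normSq_nonneg _) hw fun _ _ => Set.mem_univ _

end IsHermitian

theorem apply_re_half_smul_add_le {ι : Type*} [Fintype ι] [DecidableEq ι] {f : ℝ → ℝ}
    (hf : ConvexOn ℝ Set.univ f) {A B : Matrix ι ι ℂ} (hA : A.IsHermitian) (hB : B.IsHermitian)
    {x : ι → ℂ} (hx : star x ⬝ᵥ x = 1) :
    f (star x ⬝ᵥ ((2 : ℝ)⁻¹ • (A + B)) *ᵥ x).re ≤
      (star x ⬝ᵥ ((2 : ℝ)⁻¹ • (hA.cfc f + hB.cfc f)) *ᵥ x).re := by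
  have hmean : ∀ M N : Matrix ι ι ℂ, (star x ⬝ᵥ ((2 : ℝ)⁻¹ • (M + N)) *ᵥ x).re =
      2⁻¹ * (star x ⬝ᵥ M *ᵥ x).re + 2⁻¹ * (star x ⬝ᵥ N *ᵥ x).re := fun M N => by
    rw [smul_mulVec, add_mulVec, dotProduct_smul, dotProduct_add, Complex.real_smul,
      Complex.re_ofReal_mul, Complex.add_re, mul_add]
  rw [hmean, hmean]
  calc _ ≤ 2⁻¹ * f (star x ⬝ᵥ A *ᵥ x).re + 2⁻¹ * f (star x ⬝ᵥ B *ᵥ x).re :=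
        hf.2 trivial trivial (by norm_num) (by norm_num) (by norm_num)
    _ ≤ _ := by
      gcongr
      exacts [hA.apply_re_dotProduct_le_re_dotProduct_cfc hf hx,
        hB.apply_re_dotProduct_le_re_dotProduct_cfc hf hx]

end Matrix

namespace Matrix

lemma exists_ne_zero_forall_lt_mulVec_eq_zero {K : Type*} [Field K] {q : ℕ}
    (T : Matrix (Fin q) (Fin q) K) (j : Fin q) :
    ∃ h : Fin q → K, h ≠ 0 ∧ (∀ i, j < i → h i = 0) ∧ ∀ i, i < j → (T *ᵥ h) i = 0 := by
  -- `j + 1` free coordinates against `j` linear conditions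
  let ext := Function.ExtendByZero.linearMap K (Fin.castLE j.isLt)
  let restr := LinearMap.funLeft K K (Fin.castLE (n := j) (m := q) j.isLt.le)
  obtain ⟨x, hx, hx0⟩ := Submodule.exists_mem_ne_zero_of_ne_bot
    (LinearMap.ker_ne_bot_of_finrank_lt (f := restr ∘ₗ T.mulVecLin ∘ₗ ext) (by simp))
  refine ⟨ext x, ?_, fun i hi => ?_, fun i hi => ?_⟩
  · exact fun h => hx0 (Function.extend_injective (Fin.castLE_injective _) 0
      (h.trans (map_zero ext).symm))
  · refine Function.extend_apply' _ _ _ fun ⟨k, hk⟩ => ?_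
    rw [← hk] at hi
    exact absurd (Fin.lt_def.mp hi) (by simp; omega)
  · exact congrFun (LinearMap.mem_ker.mp hx) ⟨i, hi⟩

variable {q : ℕ} {M : Matrix (Fin q) (Fin q) ℂ}

lemma eigDesc_antitone (hM : M.IsHermitian) : Antitone (eigDesc hM) :=
  fun _ _ hab => Tuple.monotone_sort _ (Fin.rev_le_rev.mpr hab)

namespace IsHermitian

lemma exists_unitary_conj_eq_diagonal_eigDesc (hM : M.IsHermitian) :
    ∃ u ∈ unitaryGroup (Fin q) ℂ, u * M * uᴴ = diagonal fun i => (eigDesc hM i : ℂ) := by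
  set τ : Equiv.Perm (Fin q) := Fin.revPerm.trans (Tuple.sort hM.eigenvalues)
  refine ⟨((hM.eigenvectorUnitary : Matrix (Fin q) (Fin q) ℂ).submatrix id τ)ᴴ, ?_, ?_⟩
  · rw [mem_unitaryGroup_iff, star_eq_conjTranspose, conjTranspose_conjTranspose,
      submatrix_id_equiv_conjTranspose_mul_self hM.eigenvectorUnitary.2]
  · rw [conjTranspose_conjTranspose]
    exact hM.conjTranspose_mul_mul_eigenvectorUnitary_submatrix τ

lemma re_star_dotProduct_mulVec_le_eigDesc_mul (hM : M.IsHermitian)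
    {u : Matrix (Fin q) (Fin q) ℂ} (hu : u ∈ unitaryGroup (Fin q) ℂ)
    (hMu : u * M * uᴴ = diagonal fun i => (eigDesc hM i : ℂ)) {j : Fin q} {y : Fin q → ℂ}
    (hy : ∀ i, i < j → (u *ᵥ y) i = 0) :
    (star y ⬝ᵥ M *ᵥ y).re ≤ eigDesc hM j * (star y ⬝ᵥ y).re := by
  have huu : uᴴ * u = 1 := by rw [← star_eq_conjTranspose, Unitary.star_mul_self_of_mem hu]
  have hM' : M = uᴴ * diagonal (fun i => (eigDesc hM i : ℂ)) * u := by
    rw [← hMu, conjTranspose_mul_mul_conjTranspose_mul_of_conjTranspose_mul_self huu]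
  conv_lhs => rw [hM', star_dotProduct_conjTranspose_mul_mul_mulVec,
    star_dotProduct_diagonal_mulVec]
  rw [← star_mulVec_dotProduct_mulVec_of_conjTranspose_mul_self huu y, star_dotProduct_self_eq,
    Complex.ofReal_re, Complex.ofReal_re]
  exact sum_mul_le_mul_sum_of_ne_zero (fun _ => Complex.normSq_nonneg _) fun i hi =>
    eigDesc_antitone hM (not_lt.mp fun hij => hi (by simp [hy i hij]))

lemma le_eigDesc_of_forall (hM : M.IsHermitian) (j : Fin q) {c : ℝ}
    (H : ∀ h : Fin q → ℂ, (∀ i, j < i → h i = 0) → star h ⬝ᵥ h = 1 →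
      c ≤ (star h ⬝ᵥ M *ᵥ h).re) :
    c ≤ eigDesc hM j := by
  obtain ⟨u, hu, hMu⟩ := hM.exists_unitary_conj_eq_diagonal_eigDesc
  obtain ⟨h, hh0, hsupp, horth⟩ := exists_ne_zero_forall_lt_mulVec_eq_zero u j
  obtain ⟨a, ha⟩ := exists_star_smul_dotProduct_smul_eq_one hh0
  calc c ≤ (star (a • h) ⬝ᵥ M *ᵥ (a • h)).re := H _ (fun i hi => by simp [hsupp i hi]) ha
    _ ≤ eigDesc hM j * (star (a • h) ⬝ᵥ a • h).re :=
      hM.re_star_dotProduct_mulVec_le_eigDesc_mul hu hMu fun i hi => by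
        simp [mulVec_smul, horth i hi]
    _ = eigDesc hM j := by rw [ha, Complex.one_re, mul_one]

theorem exists_unitary_diagonal_le (hM : M.IsHermitian) (d : Fin q → ℝ)
    (H : ∀ (j : Fin q) (h : Fin q → ℂ), (∀ i, j < i → h i = 0) → star h ⬝ᵥ h = 1 →
      d j ≤ (star h ⬝ᵥ M *ᵥ h).re) :
    ∃ u ∈ unitaryGroup (Fin q) ℂ, (u * M * uᴴ - diagonal fun i => (d i : ℂ)).PosSemidef := by
  obtain ⟨u, hu, hMu⟩ := hM.exists_unitary_conj_eq_diagonal_eigDesc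
  refine ⟨u, hu, ?_⟩
  rw [hMu, diagonal_sub]
  refine PosSemidef.diagonal fun i => ?_
  rw [Pi.zero_apply, ← Complex.ofReal_sub, Complex.zero_le_real, sub_nonneg]
  exact hM.le_eigDesc_of_forall i (H i)

end IsHermitian

def LeMeanUnitaryConj {ι : Type*} [Fintype ι] [DecidableEq ι] (X Y : Matrix ι ι ℂ) : Prop :=
  ∃ U V : Matrix ι ι ℂ, U ∈ unitaryGroup ι ℂ ∧ V ∈ unitaryGroup ι ℂ ∧
    ((2 : ℝ)⁻¹ • (U * Y * Uᴴ + V * Y * Vᴴ) - X).PosSemidef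

theorem LeMeanUnitaryConj.of_conjTranspose_mul_mul {ι κ : Type*} [Fintype ι] [Fintype κ]
    [DecidableEq ι] [DecidableEq κ] {W : Matrix ι κ ℂ} (hW₁ : Wᴴ * W = 1) (hW₂ : W * Wᴴ = 1)
    {X : Matrix κ κ ℂ} {Y : Matrix ι ι ℂ} (h : LeMeanUnitaryConj X (Wᴴ * Y * W)) :
    LeMeanUnitaryConj (W * X * Wᴴ) Y := by
  obtain ⟨U, V, hU, hV, hXY⟩ := h
  refine ⟨W * U * Wᴴ, W * V * Wᴴ, mul_mul_conjTranspose_mem_unitaryGroup hW₁ hW₂ hU,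
    mul_mul_conjTranspose_mem_unitaryGroup hW₁ hW₂ hV, ?_⟩
  convert hXY.mul_mul_conjTranspose_same W using 1
  simp only [Matrix.mul_sub, Matrix.sub_mul, Matrix.mul_smul, Matrix.smul_mul, Matrix.mul_add,
    Matrix.add_mul, conjTranspose_mul, conjTranspose_conjTranspose, Matrix.mul_assoc]

section Blocks

variable {ι₁ ι₂ : Type*} [Fintype ι₁] [Fintype ι₂] [DecidableEq ι₁] [DecidableEq ι₂]

omit [DecidableEq ι₁] [DecidableEq ι₂] in
lemma PosSemidef.fromBlocks_zero {A : Matrix ι₁ ι₁ ℂ} {D : Matrix ι₂ ι₂ ℂ} (hA : A.PosSemidef)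
    (hD : D.PosSemidef) : (fromBlocks A 0 0 D).PosSemidef := by
  refine .of_dotProduct_mulVec_nonneg (hA.isHermitian.fromBlocks (by simp) hD.isHermitian)
    fun x => ?_
  rw [← Sum.elim_comp_inl_inr x, fromBlocks_mulVec]
  simp only [zero_mulVec, add_zero, zero_add]
  rw [← Sum.elim_comp_inl_inr (star _), sumElim_dotProduct_sumElim]
  exact add_nonneg (hA.dotProduct_mulVec_nonneg _) (hD.dotProduct_mulVec_nonneg _)

lemma fromBlocks_mem_unitaryGroup {u₁ : Matrix ι₁ ι₁ ℂ} {u₂ : Matrix ι₂ ι₂ ℂ}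
    (hu₁ : u₁ ∈ unitaryGroup ι₁ ℂ) (hu₂ : u₂ ∈ unitaryGroup ι₂ ℂ) :
    fromBlocks u₁ 0 0 u₂ ∈ unitaryGroup (ι₁ ⊕ ι₂) ℂ := by
  rw [mem_unitaryGroup_iff] at *
  rw [star_eq_conjTranspose, fromBlocks_conjTranspose, fromBlocks_multiply]
  simp [← star_eq_conjTranspose, hu₁, hu₂]

omit [DecidableEq ι₁] [DecidableEq ι₂] in
lemma fromBlocks_mul_mul_conjTranspose (u₁ : Matrix ι₁ ι₁ ℂ) (u₂ : Matrix ι₂ ι₂ ℂ)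
    (Y : Matrix (ι₁ ⊕ ι₂) (ι₁ ⊕ ι₂) ℂ) :
    fromBlocks u₁ 0 0 u₂ * Y * (fromBlocks u₁ 0 0 u₂)ᴴ =
      fromBlocks (u₁ * Y.toBlocks₁₁ * u₁ᴴ) (u₁ * Y.toBlocks₁₂ * u₂ᴴ)
        (u₂ * Y.toBlocks₂₁ * u₁ᴴ) (u₂ * Y.toBlocks₂₂ * u₂ᴴ) := by
  conv_lhs => rw [← fromBlocks_toBlocks Y]
  simp [fromBlocks_conjTranspose, fromBlocks_multiply, Matrix.mul_assoc]

theorem leMeanUnitaryConj_fromBlocks (Y : Matrix (ι₁ ⊕ ι₂) (ι₁ ⊕ ι₂) ℂ)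
    {D₁ u₁ : Matrix ι₁ ι₁ ℂ} {D₂ u₂ : Matrix ι₂ ι₂ ℂ}
    (hu₁ : u₁ ∈ unitaryGroup ι₁ ℂ) (hu₂ : u₂ ∈ unitaryGroup ι₂ ℂ)
    (h₁ : (u₁ * Y.toBlocks₁₁ * u₁ᴴ - D₁).PosSemidef)
    (h₂ : (u₂ * Y.toBlocks₂₂ * u₂ᴴ - D₂).PosSemidef) :
    LeMeanUnitaryConj (fromBlocks D₁ 0 0 D₂) Y := by
  -- replacing `u₂` by `-u₂` flips the sign of the off-diagonal blocks only
  refine ⟨fromBlocks u₁ 0 0 u₂, fromBlocks u₁ 0 0 (-u₂), fromBlocks_mem_unitaryGroup hu₁ hu₂,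
    fromBlocks_mem_unitaryGroup hu₁ (by simpa [mem_unitaryGroup_iff] using hu₂), ?_⟩
  rw [fromBlocks_mul_mul_conjTranspose, fromBlocks_mul_mul_conjTranspose]
  convert PosSemidef.fromBlocks_zero h₁ h₂ using 1
  simp only [fromBlocks_add, fromBlocks_smul, conjTranspose_neg, Matrix.neg_mul, Matrix.mul_neg,
    neg_neg]
  rw [sub_eq_add_neg, fromBlocks_neg, fromBlocks_add]
  congr 1 <;> module

end Blocks

theorem leMeanUnitaryConj_diagonal_of_forall {p q : ℕ}
    {Y : Matrix (Fin p ⊕ Fin q) (Fin p ⊕ Fin q) ℂ} (hY : Y.IsHermitian) (d : Fin p ⊕ Fin q → ℝ)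
    (h₁ : ∀ (j : Fin p) (h : Fin p → ℂ), (∀ i, j < i → h i = 0) → star h ⬝ᵥ h = 1 →
      d (.inl j) ≤ (star h ⬝ᵥ Y.toBlocks₁₁ *ᵥ h).re)
    (h₂ : ∀ (j : Fin q) (h : Fin q → ℂ), (∀ i, j < i → h i = 0) → star h ⬝ᵥ h = 1 →
      d (.inr j) ≤ (star h ⬝ᵥ Y.toBlocks₂₂ *ᵥ h).re) :
    LeMeanUnitaryConj (diagonal fun k => (d k : ℂ)) Y := by
  obtain ⟨u₁, hu₁, H₁⟩ := (hY.submatrix Sum.inl).exists_unitary_diagonal_le _ h₁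
  obtain ⟨u₂, hu₂, H₂⟩ := (hY.submatrix Sum.inr).exists_unitary_diagonal_le _ h₂
  rw [← Sum.elim_comp_inl_inr fun k => (d k : ℂ), ← fromBlocks_diagonal]
  exact leMeanUnitaryConj_fromBlocks Y hu₁ hu₂ H₁ H₂

section Compression

variable {ι κ₁ κ₂ : Type*} [Fintype ι] [Fintype κ₁] [Fintype κ₂] [DecidableEq ι]
  [DecidableEq κ₁] [DecidableEq κ₂] {f : ℝ → ℝ} {Z Y : Matrix ι ι ℂ}
  {V : Matrix ι (κ₁ ⊕ κ₂) ℂ} {ν : κ₁ ⊕ κ₂ → ℝ}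

lemma apply_sum_normSq_mul_le_toBlocks₁₁
    (hZY : ∀ x, star x ⬝ᵥ x = 1 → f (star x ⬝ᵥ Z *ᵥ x).re ≤ (star x ⬝ᵥ Y *ᵥ x).re)
    (hV : Vᴴ * V = 1) (hZV : Vᴴ * Z * V = diagonal fun k => (ν k : ℂ)) {x : κ₁ → ℂ}
    (hx : star x ⬝ᵥ x = 1) :
    f (∑ k, Complex.normSq (x k) * ν (.inl k)) ≤ (star x ⬝ᵥ (Vᴴ * Y * V).toBlocks₁₁ *ᵥ x).re := by
  have hx' : star (Sum.elim x 0 : κ₁ ⊕ κ₂ → ℂ) ⬝ᵥ Sum.elim x 0 = 1 := by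
    simpa [Function.star_sumElim, sumElim_dotProduct_sumElim] using hx
  have := hZY _ ((star_mulVec_dotProduct_mulVec_of_conjTranspose_mul_self hV _).trans hx')
  rw [← star_dotProduct_conjTranspose_mul_mul_mulVec,
    ← star_dotProduct_conjTranspose_mul_mul_mulVec, hZV, star_dotProduct_diagonal_mulVec,
    star_sumElim_zero_dotProduct_mulVec] at this
  simpa using this

lemma apply_sum_normSq_mul_le_toBlocks₂₂
    (hZY : ∀ x, star x ⬝ᵥ x = 1 → f (star x ⬝ᵥ Z *ᵥ x).re ≤ (star x ⬝ᵥ Y *ᵥ x).re)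
    (hV : Vᴴ * V = 1) (hZV : Vᴴ * Z * V = diagonal fun k => (ν k : ℂ)) {x : κ₂ → ℂ}
    (hx : star x ⬝ᵥ x = 1) :
    f (∑ k, Complex.normSq (x k) * ν (.inr k)) ≤ (star x ⬝ᵥ (Vᴴ * Y * V).toBlocks₂₂ *ᵥ x).re := by
  have hx' : star (Sum.elim 0 x : κ₁ ⊕ κ₂ → ℂ) ⬝ᵥ Sum.elim 0 x = 1 := by
    simpa [Function.star_sumElim, sumElim_dotProduct_sumElim] using hx
  have := hZY _ ((star_mulVec_dotProduct_mulVec_of_conjTranspose_mul_self hV _).trans hx')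
  rw [← star_dotProduct_conjTranspose_mul_mul_mulVec,
    ← star_dotProduct_conjTranspose_mul_mul_mulVec, hZV, star_dotProduct_diagonal_mulVec,
    star_zero_sumElim_dotProduct_mulVec] at this
  simpa using this

end Compression

theorem leMeanUnitaryConj_cfc_of_forall {ι : Type*} [Fintype ι] [DecidableEq ι] {f : ℝ → ℝ}
    (hf : ConvexOn ℝ Set.univ f) {Z Y : Matrix ι ι ℂ} (hZ : Z.IsHermitian) (hY : Y.IsHermitian)
    (hZY : ∀ x, star x ⬝ᵥ x = 1 → f (star x ⬝ᵥ Z *ᵥ x).re ≤ (star x ⬝ᵥ Y *ᵥ x).re) :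
    LeMeanUnitaryConj (hZ.cfc f) Y := by
  set s := convexHull ℝ (Set.range hZ.eigenvalues)
  obtain ⟨t, ht⟩ : ∃ t, IsMinOn f s t := by
    rcases s.eq_empty_or_nonempty with hs | hs
    · exact ⟨0, fun x hx => by simp [hs] at hx⟩
    · obtain ⟨t, -, ht⟩ := (Set.finite_range _).isCompact_convexHull ℝ |>.exists_isMinOn hs
        ((hf.continuousOn isOpen_univ).mono (Set.subset_univ _))
      exact ⟨t, ht⟩
  have hνs : ∀ i, hZ.eigenvalues i ∈ s := fun i => subset_convexHull ℝ _ ⟨i, rfl⟩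
  obtain ⟨p, q, e, hlt, hmono, hge, hanti⟩ :=
    Fintype.exists_sumEquiv_monotone_antitone hZ.eigenvalues t
  set W := (hZ.eigenvectorUnitary : Matrix ι ι ℂ).submatrix id e
  have hW₁ : Wᴴ * W = 1 := submatrix_id_equiv_conjTranspose_mul_self hZ.eigenvectorUnitary.2 e
  have hW₂ : W * Wᴴ = 1 := submatrix_id_equiv_mul_conjTranspose_self hZ.eigenvectorUnitary.2 e
  have hZW := hZ.conjTranspose_mul_mul_eigenvectorUnitary_submatrix e
  rw [hZ.cfc_eq_submatrix_mul_diagonal_mul e]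
  refine .of_conjTranspose_mul_mul hW₁ hW₂ <| leMeanUnitaryConj_diagonal_of_forall
    (isHermitian_conjTranspose_mul_mul W hY) _ (fun j h hsupp hh => ?_) fun j h hsupp hh => ?_
  · exact (hf.apply_le_apply_sum_of_monotone (convex_convexHull ℝ _) ht (fun _ => hνs _) hmono
      (fun k => (hlt k).le) (fun _ => Complex.normSq_nonneg _) (sum_normSq_eq_one hh)
      fun k hk => by simp [hsupp k hk]).trans (apply_sum_normSq_mul_le_toBlocks₁₁ hZY hW₁ hZW hh)
  · exact (hf.apply_le_apply_sum_of_antitone (convex_convexHull ℝ _) ht (fun _ => hνs _) hanti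
      hge (fun _ => Complex.normSq_nonneg _) (sum_normSq_eq_one hh)
      fun k hk => by simp [hsupp k hk]).trans (apply_sum_normSq_mul_le_toBlocks₂₂ hZY hW₁ hZW hh)

end Matrix

theorem cfc_mean_le_mean_unitary_conj
    {n : ℕ} (f : ℝ → ℝ) (hf : ConvexOn ℝ Set.univ f)
    (A B : Matrix (Fin n) (Fin n) ℂ) (hA : A.IsHermitian) (hB : B.IsHermitian) :
    ∃ U V : Matrix (Fin n) (Fin n) ℂ,
      U ∈ Matrix.unitaryGroup (Fin n) ℂ ∧ V ∈ Matrix.unitaryGroup (Fin n) ℂ ∧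
      ((2 : ℝ)⁻¹ • (U * ((2 : ℝ)⁻¹ • (hA.cfc f + hB.cfc f)) * Uᴴ +
          V * ((2 : ℝ)⁻¹ • (hA.cfc f + hB.cfc f)) * Vᴴ) -
        (isHermitian_half_smul (hA.add hB)).cfc f).PosSemidef :=
  leMeanUnitaryConj_cfc_of_forall hf _
    (isHermitian_half_smul ((isHermitian_cfc hA f).add (isHermitian_cfc hB f)))
    fun _ hx => apply_re_half_smul_add_le hf hA hB hx
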